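/- For all integers n > k ≥ 2, the quantity E[d_n(k)] := m + m ∑_{ℓ=k}^{n−1} E[ψ_k] ∏_{i=k+1}^{ℓ}(1 − E[ψ_i]) satisfies m + m·(χ/(1−χ))·((n/k)^{1−χ} − 1)·(1 − 1/k) ≤ E[d_n(k)] ≤ m + m·(χ/(1−χ))·((n/k)^{1−χ} − 1)·(1 + 4/k). -/

import Mathlib

/-!
A Beta(p, q) variable has mean p / (p + q), which for the parameters of `ψ j` is χ / d_j with
d_j = j - 2 + 2χ. Since d_{i+1} - χ = d_i + (1 - χ), the partial products
∏_{i=k+1}^{ℓ} (1 - χ / d_i) equal (d_k / d_ℓ) G(ℓ), where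
G(ℓ) = ∏_{i=k}^{ℓ-1} (1 + (1 - χ) / d_i). So the ℓ-th summand is χ / (1 - χ) (G(ℓ+1) - G(ℓ))
and the sum telescopes to χ / (1 - χ) (G(n) - 1). Both bounds on G(n) in terms of
x_n = (n / k)^(1-χ) follow by induction on n from Bernoulli's inequality (1 + s)^ε ≤ 1 + ε s
for ε = 1 - χ ∈ (0, 1/2]; the upper one also uses (1 + 4/k) x_n ≤ 2 (n + 1) / k, a consequence
of x_n ≤ √(n / k).
-/

open MeasureTheory ProbabilityTheory Real

/-- The Beta(p,q) measure on ℝ: density `x^(p-1)(1-x)^(q-1)/B(p,q)` on `(0,1)`. -/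
noncomputable def betaMeasure' (p q : ℝ) : Measure ℝ :=
  MeasureTheory.volume.withDensity fun x => ENNReal.ofReal
    ((Set.Ioo (0:ℝ) 1).indicator
      (fun t => t ^ (p - 1) * (1 - t) ^ (q - 1) /
        ∫ s in Set.Ioo (0:ℝ) 1, s ^ (p - 1) * (1 - s) ^ (q - 1)) x)

open Set

theorem rpow_mul_one_sub_rpow_nonneg {x : ℝ} (hx : x ∈ Icc 0 1) (p q : ℝ) :
    0 ≤ x ^ p * (1 - x) ^ q :=
  mul_nonneg (rpow_nonneg hx.1 p) (rpow_nonneg (sub_nonneg.2 hx.2) q)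

theorem setIntegral_Ioo_rpow_mul_one_sub_rpow {p q : ℝ} (hp : 0 < p) (hq : 0 < q) :
    ∫ x in Ioo 0 1, x ^ (p - 1) * (1 - x) ^ (q - 1) = beta p q := by
  have hnormalized : ∫ x in Ioo 0 1, 1 / beta p q * (x ^ (p - 1) * (1 - x) ^ (q - 1)) = 1 := by
    simp_rw [← mul_assoc]
    rw [integral_eq_lintegral_of_nonneg_ae, ← lintegral_betaPDF, lintegral_betaPDF_eq_one hp hq,
      ENNReal.toReal_one]
    · filter_upwards [ae_restrict_mem measurableSet_Ioo] with x hx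
      rw [mul_assoc]
      exact mul_nonneg (one_div_nonneg.2 (beta_pos hp hq).le)
        (rpow_mul_one_sub_rpow_nonneg (Ioo_subset_Icc_self hx) _ _)
    · exact Measurable.aestronglyMeasurable (by fun_prop)
  rw [integral_const_mul, one_div, inv_mul_eq_one₀ (beta_pos hp hq).ne'] at hnormalized
  exact hnormalized.symm

theorem beta_add_one_left {p q : ℝ} (hp : p ≠ 0) (hpq : p + q ≠ 0) :
    beta (p + 1) q = p / (p + q) * beta p q := by
  rw [beta, beta, add_right_comm, Gamma_add_one hp, Gamma_add_one hpq, div_mul_div_comm,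
    mul_assoc p]

theorem integral_id_betaMeasure' {p q : ℝ} (hp : 0 < p) (hq : 0 < q) :
    ∫ x, x ∂betaMeasure' p q = p / (p + q) := by
  have hB := beta_pos hp hq
  rw [betaMeasure', setIntegral_Ioo_rpow_mul_one_sub_rpow hp hq,
    integral_withDensity_eq_integral_toReal_smul (by fun_prop (disch := exact measurableSet_Ioo))
      (ae_of_all _ fun _ => ENNReal.ofReal_lt_top)]
  have hdensity : ∀ x, (ENNReal.ofReal ((Ioo (0:ℝ) 1).indicator
      (fun t => t ^ (p - 1) * (1 - t) ^ (q - 1) / beta p q) x)).toReal • x =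
      (Ioo (0:ℝ) 1).indicator (fun t => t ^ (p + 1 - 1) * (1 - t) ^ (q - 1) / beta p q) x := by
    intro x
    by_cases hx : x ∈ Ioo (0:ℝ) 1
    · have := hx.1.ne'
      rw [indicator_of_mem hx, indicator_of_mem hx, ENNReal.toReal_ofReal
        (div_nonneg (rpow_mul_one_sub_rpow_nonneg (Ioo_subset_Icc_self hx) _ _) hB.le),
        smul_eq_mul, add_sub_cancel_right, rpow_sub_one hx.1.ne']
      field_simp
    · simp [indicator_of_notMem hx]
  simp_rw [hdensity]
  rw [integral_indicator measurableSet_Ioo, integral_div,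
    setIntegral_Ioo_rpow_mul_one_sub_rpow (by linarith) hq,
    beta_add_one_left hp.ne' (by linarith)]
  field_simp

theorem integral_eq_of_map_eq_betaMeasure' {Ω : Type*} [MeasurableSpace Ω] {μ : Measure Ω}
    {X : Ω → ℝ} (hX : Measurable X) {p q : ℝ} (hp : 0 < p) (hq : 0 < q)
    (hdist : μ.map X = betaMeasure' p q) : ∫ ω, X ω ∂μ = p / (p + q) := by
  rw [← integral_map (f := fun x => x) hX.aemeasurable aestronglyMeasurable_id, hdist,
    integral_id_betaMeasure' hp hq]

theorem beta_params_mean_eq {m u χ : ℝ} (j : ℝ) (hm : m ≠ 0) (hu : 0 ≤ u)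
    (hχ : χ = (1 + 2 * u) / (2 + 2 * u)) :
    (m + 2 * m * u) / (m + 2 * m * u + ((2 * j - 3) * m + 2 * m * u * (j - 1))) =
      χ / (j - 2 + 2 * χ) := by
  have h2u : 2 + 2 * u ≠ 0 := by positivity
  have hp : m + 2 * m * u = m * (2 + 2 * u) * χ := by rw [hχ]; field_simp
  have hpq : m + 2 * m * u + ((2 * j - 3) * m + 2 * m * u * (j - 1)) =
      m * (2 + 2 * u) * (j - 2 + 2 * χ) := by rw [hχ]; field_simp; ring
  rw [hpq, hp, mul_div_mul_left _ _ (mul_ne_zero hm h2u)]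

theorem rpow_mul_one_add_le {b s ε : ℝ} (hb : 0 ≤ b) (hs : -1 ≤ s) (hε0 : 0 ≤ ε)
    (hε1 : ε ≤ 1) :
    (b * (1 + s)) ^ ε ≤ b ^ ε * (1 + ε * s) := by
  rw [mul_rpow hb (by linarith)]
  exact mul_le_mul_of_nonneg_left (rpow_one_add_le_one_add_mul_self hs hε0 hε1) (rpow_nonneg hb _)

theorem rpow_succ_div_mul_le_sub_mul {a k ε : ℝ} (ha : 0 ≤ a) (hk : 0 < k) (hε0 : 0 ≤ ε)
    (hε1 : ε ≤ 1) : ((a + 1) / k) ^ ε * ε ≤ (((a + 1) / k) ^ ε - (a / k) ^ ε) * (a + 1) := by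
  have ha1 : 0 < a + 1 := by linarith
  have hbernoulli : (a / k) ^ ε ≤ ((a + 1) / k) ^ ε * (1 + ε * (-1 / (a + 1))) := by
    rw [show a / k = (a + 1) / k * (1 + -1 / (a + 1)) by field_simp; ring]
    refine rpow_mul_one_add_le (by positivity) ?_ hε0 hε1
    rw [neg_div, neg_le_neg_iff, div_le_one ha1]
    linarith
  have h := mul_le_mul_of_nonneg_right hbernoulli ha1.le
  rw [show ((a + 1) / k) ^ ε * (1 + ε * (-1 / (a + 1))) * (a + 1) =
    ((a + 1) / k) ^ ε * (a + 1) - ((a + 1) / k) ^ ε * ε by field_simp; ring] at h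
  linarith

theorem one_add_four_div_mul_rpow_le {k n ε : ℝ} (hk : 2 ≤ k) (hkn : k ≤ n) (hε : ε ≤ 1 / 2) :
    (1 + 4 / k) * (n / k) ^ ε ≤ 2 * (n + 1) / k := by
  have hk0 : 0 < k := by linarith
  have hnk : 1 ≤ n / k := (one_le_div hk0).2 hkn
  obtain ⟨t, ht1, rfl⟩ : ∃ t, 1 ≤ t ∧ n = k * t ^ 2 :=
    ⟨√(n / k), one_le_sqrt.2 hnk, by rw [sq_sqrt (by linarith)]; field_simp⟩
  have hsqrt : (k * t ^ 2 / k) ^ ε ≤ t := by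
    rw [mul_div_cancel_left₀ _ hk0.ne', ← rpow_natCast, ← rpow_mul (by linarith)]
    calc t ^ ((2 : ℕ) * ε) ≤ t ^ (1 : ℝ) :=
          rpow_le_rpow_of_exponent_le ht1 (by push_cast; linarith)
      _ = t := rpow_one t
  calc (1 + 4 / k) * (k * t ^ 2 / k) ^ ε ≤ (1 + 4 / k) * t := by gcongr
    _ ≤ 2 * (k * t ^ 2 + 1) / k := by
      rw [one_add_div hk0.ne', div_mul_eq_mul_div, div_le_div_iff_of_pos_right hk0]
      nlinarith [mul_nonneg (sub_nonneg.2 hk) (sq_nonneg t), sq_nonneg (t - 1),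
        mul_nonneg hk0.le (mul_nonneg (by linarith : (0 : ℝ) ≤ t) (sub_nonneg.2 ht1))]

noncomputable def degreeGrowth (χ : ℝ) (k n : ℕ) : ℝ :=
  ∏ i ∈ Finset.Ico k n, (1 + (1 - χ) / ((i : ℝ) - 2 + 2 * χ))

section

variable {χ : ℝ} {k n : ℕ}

@[simp]
theorem degreeGrowth_self : degreeGrowth χ k k = 1 := by
  simp [degreeGrowth]

theorem degreeGrowth_succ (hkn : k ≤ n) :
    degreeGrowth χ k (n + 1) = degreeGrowth χ k n * (1 + (1 - χ) / ((n : ℝ) - 2 + 2 * χ)) :=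
  Finset.prod_Ico_succ_top hkn _

theorem sub_two_add_two_mul_pos (hχ : 0 < χ) {i : ℕ} (hi : 2 ≤ i) :
    0 < (i : ℝ) - 2 + 2 * χ := by
  have : (2 : ℝ) ≤ i := by exact_mod_cast hi
  linarith

theorem prod_Icc_one_sub_eq_mul_degreeGrowth (hχ : 0 < χ) {ℓ : ℕ} (hk : 2 ≤ k)
    (hkℓ : k ≤ ℓ) :
    ∏ i ∈ Finset.Icc (k + 1) ℓ, (1 - χ / ((i : ℝ) - 2 + 2 * χ)) =
      ((k : ℝ) - 2 + 2 * χ) / ((ℓ : ℝ) - 2 + 2 * χ) * degreeGrowth χ k ℓ := by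
  induction ℓ, hkℓ using Nat.le_induction with
  | base =>
    rw [Finset.Icc_eq_empty (by omega), Finset.prod_empty, degreeGrowth_self, mul_one,
      div_self (sub_two_add_two_mul_pos hχ hk).ne']
  | succ ℓ hkℓ ih =>
    have hℓ := sub_two_add_two_mul_pos hχ (hk.trans hkℓ)
    have hℓ1 := sub_two_add_two_mul_pos hχ (hk.trans (Nat.le_succ_of_le hkℓ))
    rw [Finset.prod_Icc_succ_top (by omega), ih, degreeGrowth_succ hkℓ]
    push_cast at hℓ1 ⊢
    field_simp
    ring

theorem mean_mul_prod_eq_sub_degreeGrowth (hχ : 0 < χ) (hχ1 : χ ≠ 1)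
    {ℓ : ℕ} (hk : 2 ≤ k) (hkℓ : k ≤ ℓ) :
    χ / ((k : ℝ) - 2 + 2 * χ) * ∏ i ∈ Finset.Icc (k + 1) ℓ, (1 - χ / ((i : ℝ) - 2 + 2 * χ)) =
      χ / (1 - χ) * (degreeGrowth χ k (ℓ + 1) - degreeGrowth χ k ℓ) := by
  have hk' := (sub_two_add_two_mul_pos hχ hk).ne'
  have hℓ := (sub_two_add_two_mul_pos hχ (hk.trans hkℓ)).ne'
  have : 1 - χ ≠ 0 := sub_ne_zero.2 hχ1.symm
  rw [prod_Icc_one_sub_eq_mul_degreeGrowth hχ hk hkℓ, degreeGrowth_succ hkℓ]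
  generalize (k : ℝ) - 2 + 2 * χ = dk at hk' ⊢
  generalize (ℓ : ℝ) - 2 + 2 * χ = dℓ at hℓ ⊢
  field_simp
  ring

theorem sum_mul_prod_one_sub_eq (hχ : 0 < χ) (hχ1 : χ ≠ 1) {a : ℕ → ℝ}
    (ha : ∀ j, 2 ≤ j → a j = χ / ((j : ℝ) - 2 + 2 * χ)) (hk : 2 ≤ k) (hkn : k < n) :
    ∑ ℓ ∈ Finset.Icc k (n - 1), a k * ∏ i ∈ Finset.Icc (k + 1) ℓ, (1 - a i) =
      χ / (1 - χ) * (degreeGrowth χ k n - 1) := by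
  rw [Finset.Icc_sub_one_right_eq_Ico_of_not_isMin (by simp [isMin_iff_eq_bot]; omega)]
  calc _ = ∑ ℓ ∈ Finset.Ico k n,
          χ / (1 - χ) * (degreeGrowth χ k (ℓ + 1) - degreeGrowth χ k ℓ) :=
        Finset.sum_congr rfl fun ℓ hℓ => by
          have hkℓ := (Finset.mem_Ico.1 hℓ).1
          rw [← mean_mul_prod_eq_sub_degreeGrowth hχ hχ1 hk hkℓ, ha k hk]
          exact congrArg _ (Finset.prod_congr rfl fun i hi => by
            rw [ha i (by have := (Finset.mem_Icc.1 hi).1; omega)])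
    _ = _ := by rw [← Finset.mul_sum, Finset.sum_Ico_sub _ hkn.le, degreeGrowth_self]

theorem rpow_div_le_degreeGrowth (hχ : 0 < χ) (hχ1 : χ ≤ 1) (hk : 2 ≤ k)
    (hkn : k ≤ n) : ((n : ℝ) / k) ^ (1 - χ) ≤ degreeGrowth χ k n := by
  induction n, hkn using Nat.le_induction with
  | base => rw [div_self (by positivity), one_rpow, degreeGrowth_self]
  | succ n hkn ih =>
    have hn : (0 : ℝ) < n := by exact_mod_cast (by omega : 0 < n)
    have hd := sub_two_add_two_mul_pos hχ (hk.trans hkn)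
    have hbernoulli : (((n + 1 : ℕ) : ℝ) / k) ^ (1 - χ) ≤
        ((n : ℝ) / k) ^ (1 - χ) * (1 + (1 - χ) * (1 / n)) := by
      rw [show ((n + 1 : ℕ) : ℝ) / k = n / k * (1 + 1 / n) by push_cast; field_simp]
      exact rpow_mul_one_add_le (by positivity) (by linarith [one_div_pos.2 hn]) (by linarith)
        (by linarith)
    have hfactor : (1 - χ) * (1 / n) ≤ (1 - χ) / ((n : ℝ) - 2 + 2 * χ) := by
      rw [mul_one_div]
      exact div_le_div_of_nonneg_left (by linarith) hd (by linarith)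
    rw [degreeGrowth_succ hkn]
    calc _ ≤ _ := hbernoulli
      _ ≤ _ := mul_le_mul ih (by linarith)
          (add_nonneg zero_le_one (mul_nonneg (sub_nonneg.2 hχ1) (by positivity)))
          ((rpow_nonneg (by positivity) _).trans ih)

theorem degreeGrowth_le (hχ : 1 / 2 ≤ χ) (hχ1 : χ ≤ 1) (hk : 2 ≤ k)
    (hkn : k ≤ n) :
    degreeGrowth χ k n ≤ 1 + (1 + 4 / (k : ℝ)) * (((n : ℝ) / k) ^ (1 - χ) - 1) := by
  have hk0 : (0 : ℝ) < k := by positivity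
  set B := 1 + 4 / (k : ℝ) with hB
  induction n, hkn using Nat.le_induction with
  | base => rw [div_self hk0.ne', one_rpow, degreeGrowth_self]; simp
  | succ n hkn ih =>
    have hkn' : (k : ℝ) ≤ n := by exact_mod_cast hkn
    have hn1 : (0 : ℝ) < n + 1 := by positivity
    have hd := sub_two_add_two_mul_pos (χ := χ) (by linarith) (hk.trans hkn)
    set x := ((n : ℝ) / k) ^ (1 - χ)
    set y := (((n : ℝ) + 1) / k) ^ (1 - χ) with hy
    have hxy : x ≤ y := rpow_le_rpow (by positivity) (by gcongr; linarith) (by linarith)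
    have hBx : B * x ≤ 2 * (n + 1) / k :=
      one_add_four_div_mul_rpow_le (by exact_mod_cast hk) hkn' (by linarith)
    have hgap : y * (1 - χ) ≤ (y - x) * (n + 1) :=
      rpow_succ_div_mul_le_sub_mul (Nat.cast_nonneg n) hk0 (by linarith) (by linarith)
    have hR : (1 + B * (x - 1)) * (n + 1) ≤ B * y * ((n : ℝ) - 2 + 2 * χ) := by
      have h1 : B * x * (3 - 2 * χ) ≤ B * x * 2 := by gcongr; linarith
      have h2 : B * x * ((n : ℝ) - 2 + 2 * χ) ≤ B * y * ((n : ℝ) - 2 + 2 * χ) := by gcongr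
      have e : (1 + B * (x - 1)) * (n + 1) =
          B * x * ((n : ℝ) - 2 + 2 * χ) + B * x * (3 - 2 * χ) - 2 * (2 * (n + 1) / k) := by
        rw [hB]; ring
      linarith
    have hstep : (1 + B * (x - 1)) * (1 - χ) ≤ B * (y - x) * ((n : ℝ) - 2 + 2 * χ) := by
      have h1 := mul_le_mul_of_nonneg_right hR (sub_nonneg.2 hχ1)
      have h2 := mul_le_mul_of_nonneg_left hgap
        (by positivity : 0 ≤ B * ((n : ℝ) - 2 + 2 * χ))
      refine le_of_mul_le_mul_right ?_ hn1
      linarith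
    rw [degreeGrowth_succ hkn, Nat.cast_succ, ← hy]
    calc _ ≤ (1 + B * (x - 1)) * (1 + (1 - χ) / ((n : ℝ) - 2 + 2 * χ)) :=
          mul_le_mul_of_nonneg_right ih (by positivity)
      _ = 1 + B * (x - 1) + (1 + B * (x - 1)) * (1 - χ) / ((n : ℝ) - 2 + 2 * χ) := by ring
      _ ≤ 1 + B * (x - 1) + B * (y - x) := by gcongr; rw [div_le_iff₀ hd]; exact hstep
      _ = 1 + B * (y - 1) := by ring

end

theorem expected_degree_bounds_general {Ω : Type*} [MeasurableSpace Ω] (μ : Measure Ω)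
    (m : ℕ) (hm : 2 ≤ m) (α : ℝ) (hα : α ∈ Set.Ico (0:ℝ) 1)
    (u χ : ℝ) (hu : u = α / (1 - α)) (hχ : χ = (1 + 2*u) / (2 + 2*u))
    (ψ : ℕ → Ω → ℝ) (hmeas : ∀ j, Measurable (ψ j))
    (hdist : ∀ j : ℕ, 2 ≤ j → Measure.map (ψ j) μ =
      betaMeasure' (m + 2*m*u) ((2*(j:ℝ) - 3)*m + 2*m*u*((j:ℝ) - 1)))
    (n k : ℕ) (hk : 2 ≤ k) (hkn : k < n) :
    m + m * (χ / (1 - χ)) * (((n:ℝ)/k) ^ (1 - χ) - 1) * (1 - 1/(k:ℝ)) ≤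
        m + m * ∑ ℓ ∈ Finset.Icc k (n-1),
          (∫ ω, ψ k ω ∂μ) * ∏ i ∈ Finset.Icc (k+1) ℓ, (1 - ∫ ω, ψ i ω ∂μ) ∧
      m + m * ∑ ℓ ∈ Finset.Icc k (n-1),
          (∫ ω, ψ k ω ∂μ) * ∏ i ∈ Finset.Icc (k+1) ℓ, (1 - ∫ ω, ψ i ω ∂μ) ≤
        m + m * (χ / (1 - χ)) * (((n:ℝ)/k) ^ (1 - χ) - 1) * (1 + 4/(k:ℝ)) := by
  have hu0 : 0 ≤ u := hu ▸ div_nonneg hα.1 (sub_nonneg.2 hα.2.le)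
  have hχ_half : 1 / 2 ≤ χ := by rw [hχ, le_div_iff₀ (by positivity)]; linarith
  have hχ_lt : χ < 1 := by rw [hχ, div_lt_one (by positivity)]; linarith
  have hmean : ∀ j, 2 ≤ j → ∫ ω, ψ j ω ∂μ = χ / ((j : ℝ) - 2 + 2 * χ) := by
    intro j hj
    have hm0 : (0 : ℝ) < m := by positivity
    have hj' : (2 : ℝ) ≤ j := by exact_mod_cast hj
    have hq : 0 < (2 * (j : ℝ) - 3) * m + 2 * m * u * (j - 1) := by
      have := mul_nonneg (mul_nonneg hm0.le hu0) (by linarith : (0 : ℝ) ≤ j - 1)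
      nlinarith
    rw [integral_eq_of_map_eq_betaMeasure' (hmeas j) (by positivity) hq (hdist j hj),
      beta_params_mean_eq _ hm0.ne' hu0 hχ]
  rw [sum_mul_prod_one_sub_eq (by linarith) hχ_lt.ne hmean hk hkn]
  have hx : 1 ≤ ((n : ℝ) / k) ^ (1 - χ) :=
    one_le_rpow ((one_le_div (by positivity)).2 (by exact_mod_cast hkn.le)) (by linarith)
  have hlower := rpow_div_le_degreeGrowth (by linarith) hχ_lt.le hk hkn.le
  have hupper := degreeGrowth_le hχ_half hχ_lt.le hk hkn.le
  have hk1 : 0 ≤ 1 / (k : ℝ) := by positivity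
  have hc : 0 ≤ (m : ℝ) * (χ / (1 - χ)) := by
    have := sub_pos.2 hχ_lt
    positivity
  constructor
  · have h := mul_le_mul_of_nonneg_left
      (by nlinarith : (((n : ℝ) / k) ^ (1 - χ) - 1) * (1 - 1 / k) ≤ degreeGrowth χ k n - 1) hc
    linarith
  · have h := mul_le_mul_of_nonneg_left (sub_le_iff_le_add'.2 hupper) hc
    linarith

/-- For all integers `n > k ≥ 2`, the quantity
`E[d_n(k)] := m + m ∑_{ℓ=k}^{n-1} E[ψ_k] ∏_{i=k+1}^ℓ (1 − E[ψ_i])` satisfies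
`m + m (χ/(1-χ)) ((n/k)^(1-χ) − 1)(1 − 1/k) ≤ E[d_n(k)]
   ≤ m + m (χ/(1-χ)) ((n/k)^(1-χ) − 1)(1 + 4/k)`,
where `ψ_j ~ Beta(m+2mu, (2j-3)m+2mu(j-1))`, `u = α/(1-α)`, `χ = (1+2u)/(2+2u)`. -/
theorem expected_degree_bounds {Ω : Type*} [MeasurableSpace Ω] (μ : Measure Ω)
    [IsProbabilityMeasure μ] (m : ℕ) (hm : 2 ≤ m) (α : ℝ) (hα : α ∈ Set.Ico (0:ℝ) 1)
    (u χ : ℝ) (hu : u = α / (1 - α)) (hχ : χ = (1 + 2*u) / (2 + 2*u))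
    (ψ : ℕ → Ω → ℝ) (hmeas : ∀ j, Measurable (ψ j))
    (hdist : ∀ j : ℕ, 2 ≤ j → Measure.map (ψ j) μ =
      betaMeasure' (m + 2*m*u) ((2*(j:ℝ) - 3)*m + 2*m*u*((j:ℝ) - 1)))
    (n k : ℕ) (hk : 2 ≤ k) (hkn : k < n) :
    m + m * (χ / (1 - χ)) * (((n:ℝ)/k) ^ (1 - χ) - 1) * (1 - 1/(k:ℝ)) ≤
        m + m * ∑ ℓ ∈ Finset.Icc k (n-1),
          (∫ ω, ψ k ω ∂μ) * ∏ i ∈ Finset.Icc (k+1) ℓ, (1 - ∫ ω, ψ i ω ∂μ) ∧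
      m + m * ∑ ℓ ∈ Finset.Icc k (n-1),
          (∫ ω, ψ k ω ∂μ) * ∏ i ∈ Finset.Icc (k+1) ℓ, (1 - ∫ ω, ψ i ω ∂μ) ≤
        m + m * (χ / (1 - χ)) * (((n:ℝ)/k) ^ (1 - χ) - 1) * (1 + 4/(k:ℝ)) :=
  expected_degree_bounds_general μ m hm α hα u χ hu hχ ψ hmeas hdist n k hk hkn
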